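/- Let p be an even integer with p > 2, let ν be a real number with 0 < ν < (p−2)/p, and let k ≥ 1 be an integer. There exists a constant C > 0, depending only on p, ν and k, such that for every function f : ℂ → ℝ that is k times continuously differentiable on an open neighborhood of the closed unit disk D = {z ∈ ℂ : ‖z‖ ≤ 1} and satisfies f(0) = 0: Σ_{j=0}^{k} ∫_D ‖z‖^{jp − νp − 2} · ‖D^j f(z)‖^p dA(z) ≤ C · Σ_{j=0}^{k} ∫_D ‖D^j f(z)‖^p dA(z). -/

import Mathlib

/-!
For `j ≥ 1` the weight `‖z‖ ^ (j p - ν p - 2)` is at most `1` on the disk, so only the term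
`j = 0` matters, and there the estimate is Hardy's inequality
`∫_B ‖z‖ ^ (α - p) |f| ^ p ≤ K ∫_B ‖Df‖ ^ p` for `f 0 = 0` and `α = p - ν p - 2 > 0`, which holds
on the unit ball `B` of any `n`-dimensional space with `n < p`. Writing `f z = ∫₀¹ Df(tz) z dt`
and applying Hölder's inequality with weight `t ^ (n - 1)` (possible since `n < p`) gives
`‖z‖ ^ (α - p) |f z| ^ p ≤ L ‖z‖ ^ α ∫₀¹ t ^ (n - 1) ‖Df(tz)‖ ^ p dt`.
Integrating over the ball, the substitution `w = t z` turns the right-hand side into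
`L ∫₀¹ t ^ (-α - 1) ∫_{‖w‖ ≤ t} ‖w‖ ^ α ‖Df(w)‖ ^ p dw dt`, and integrating in `t` first,
`∫_{‖w‖}^∞ t ^ (-α - 1) dt = ‖w‖ ^ (-α) / α` cancels the weight `‖w‖ ^ α`.
-/

open MeasureTheory Metric Set Module
open scoped ENNReal NNReal Pointwise

theorem lintegral_Ioc_ofReal_rpow_rpow_lt_top {β q : ℝ} (h : β * q < 1) :
    ∫⁻ t in Ioc (0 : ℝ) 1, ENNReal.ofReal (t ^ β) ^ (-q) < ∞ := by
  rw [setLIntegral_congr_fun measurableSet_Ioc fun t ht ↦ by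
    rw [ENNReal.ofReal_rpow_of_pos (Real.rpow_pos_of_pos ht.1 β), ← Real.rpow_mul ht.1.le]]
  exact ((intervalIntegrable_iff_integrableOn_Ioc_of_le zero_le_one).1
    (intervalIntegral.intervalIntegrable_rpow' (by linarith))).lintegral_lt_top

theorem lintegral_Ioi_rpow_of_lt {s : ℝ} (hs : s < -1) {a : ℝ} (ha : 0 < a) :
    ∫⁻ t in Ioi a, ENNReal.ofReal (t ^ s) = ENNReal.ofReal (-a ^ (s + 1) / (s + 1)) := by
  rw [← integral_Ioi_rpow_of_lt hs ha, ofReal_integral_eq_lintegral_ofReal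
    (integrableOn_Ioi_rpow_of_lt hs ha)]
  filter_upwards [ae_restrict_mem measurableSet_Ioi] with t ht
  exact Real.rpow_nonneg (ha.trans ht).le s

theorem ENNReal.lintegral_rpow_le_lintegral_weight_rpow_mul {α : Type*} [MeasurableSpace α]
    (μ : Measure α) {p : ℝ} (hp : 1 < p) {w g : α → ℝ≥0∞} (hw : AEMeasurable w μ)
    (hg : AEMeasurable g μ) (hw0 : ∀ᵐ x ∂μ, w x ≠ 0) (hwtop : ∀ᵐ x ∂μ, w x ≠ ∞) :
    (∫⁻ x, g x ∂μ) ^ p ≤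
      (∫⁻ x, w x ^ (-(p - 1)⁻¹) ∂μ) ^ (p - 1) * ∫⁻ x, w x * g x ^ p ∂μ := by
  have hpq : p.HolderConjugate p.conjExponent := .conjExponent hp
  have hq : p.conjExponent = p / (p - 1) := rfl
  have hp0 : 0 < p := by linarith
  have hsplit : ∀ᵐ x ∂μ, g x = (w x ^ p⁻¹ * g x) * w x ^ (-p⁻¹) := by
    filter_upwards [hw0, hwtop] with x hx0 hxtop
    rw [mul_comm (w x ^ p⁻¹), mul_assoc, ← ENNReal.rpow_add _ _ hx0 hxtop, add_neg_cancel,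
      ENNReal.rpow_zero, mul_one]
  have hF : ∀ x, (w x ^ p⁻¹ * g x) ^ p = w x * g x ^ p := fun x ↦ by
    rw [ENNReal.mul_rpow_of_nonneg _ _ hp0.le, ← ENNReal.rpow_mul, inv_mul_cancel₀ hp0.ne',
      ENNReal.rpow_one]
  have hG : ∀ x, (w x ^ (-p⁻¹)) ^ p.conjExponent = w x ^ (-(p - 1)⁻¹) := fun x ↦ by
    rw [← ENNReal.rpow_mul, hq]
    congr 1
    field_simp
  calc (∫⁻ x, g x ∂μ) ^ p
      = (∫⁻ x, (w x ^ p⁻¹ * g x) * w x ^ (-p⁻¹) ∂μ) ^ p := by rw [lintegral_congr_ae hsplit]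
    _ ≤ ((∫⁻ x, (w x ^ p⁻¹ * g x) ^ p ∂μ) ^ (1 / p) *
          (∫⁻ x, (w x ^ (-p⁻¹)) ^ p.conjExponent ∂μ) ^ (1 / p.conjExponent)) ^ p :=
        ENNReal.rpow_le_rpow (ENNReal.lintegral_mul_le_Lp_mul_Lq μ hpq
          ((hw.pow_const _).mul hg) (hw.pow_const _)) hp0.le
    _ = (∫⁻ x, w x ^ (-(p - 1)⁻¹) ∂μ) ^ (p - 1) * ∫⁻ x, w x * g x ^ p ∂μ := by
        simp_rw [hF, hG]
        rw [ENNReal.mul_rpow_of_nonneg _ _ hp0.le, ← ENNReal.rpow_mul, ← ENNReal.rpow_mul,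
          one_div_mul_cancel hp0.ne', ENNReal.rpow_one, mul_comm, hq]
        congr 2
        field_simp

section

variable {E : Type*} [NormedAddCommGroup E]

theorem ofReal_norm_rpow {x : E} {p : ℝ} (hp : 0 ≤ p) : ENNReal.ofReal (‖x‖ ^ p) = ‖x‖ₑ ^ p := by
  rw [← ENNReal.ofReal_rpow_of_nonneg (norm_nonneg x) hp, ofReal_norm]

theorem setLIntegral_closedBall_rpow_mul_le [MeasurableSpace E] [OpensMeasurableSpace E]
    (μ : Measure E) {r : ℝ} (hr : 0 ≤ r) {g : E → ℝ} (hg : 0 ≤ g) :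
    ∫⁻ z in closedBall (0 : E) 1, ENNReal.ofReal (‖z‖ ^ r * g z) ∂μ ≤
      ∫⁻ z in closedBall (0 : E) 1, ENNReal.ofReal (g z) ∂μ :=
  setLIntegral_mono' measurableSet_closedBall fun z hz ↦ ENNReal.ofReal_le_ofReal <|
    mul_le_of_le_one_left (hg z) <|
      Real.rpow_le_one (norm_nonneg z) (mem_closedBall_zero_iff.1 hz) hr

theorem lintegral_Ioc_rpow_mul_indicator_closedBall_le (Ψ : E → ℝ≥0∞) {α : ℝ} (hα : 0 < α)
    (w : E) :
    ∫⁻ t in Ioc (0 : ℝ) 1, ENNReal.ofReal (t ^ (-α - 1)) *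
        (closedBall (0 : E) t).indicator (fun w ↦ ENNReal.ofReal (‖w‖ ^ α) * Ψ w) w ≤
      ENNReal.ofReal α⁻¹ * (closedBall (0 : E) 1).indicator Ψ w := by
  rcases eq_or_ne w 0 with rfl | hw
  · have h0 : ∀ t : ℝ,
        (closedBall (0 : E) t).indicator (fun w ↦ ENNReal.ofReal (‖w‖ ^ α) * Ψ w) 0 = 0 :=
      fun t ↦ indicator_apply_eq_zero.2 fun _ ↦ by simp [Real.zero_rpow hα.ne']
    simp [h0]
  by_cases hw1 : ‖w‖ ≤ 1
  · have hwpos : 0 < ‖w‖ := norm_pos_iff.2 hw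
    calc _ ≤ ∫⁻ t, ENNReal.ofReal (‖w‖ ^ α) * Ψ w *
            (Ici ‖w‖).indicator (fun t ↦ ENNReal.ofReal (t ^ (-α - 1))) t :=
          setLIntegral_le_lintegral _ _ |>.trans_eq' <| lintegral_congr fun t ↦ by
            by_cases ht : ‖w‖ ≤ t <;> simp [ht, mul_comm]
      _ = ENNReal.ofReal (‖w‖ ^ α) * Ψ w * ENNReal.ofReal (‖w‖ ^ (-α) / α) := by
          rw [lintegral_const_mul _ ((by fun_prop : Measurable fun t : ℝ ↦
              ENNReal.ofReal (t ^ (-α - 1))).indicator measurableSet_Ici),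
            lintegral_indicator measurableSet_Ici, setLIntegral_congr Ioi_ae_eq_Ici.symm,
            lintegral_Ioi_rpow_of_lt (by linarith) hwpos]
          ring_nf
      _ = ENNReal.ofReal α⁻¹ * (closedBall (0 : E) 1).indicator Ψ w := by
          rw [indicator_of_mem (mem_closedBall_zero_iff.2 hw1), mul_comm, ← mul_assoc,
            ← ENNReal.ofReal_mul (by positivity), div_eq_mul_inv, mul_comm _ α⁻¹, mul_assoc,
            ← Real.rpow_add hwpos, neg_add_cancel, Real.rpow_zero, mul_one]
  · have hw1' : ∀ t ∈ Ioc (0 : ℝ) 1, w ∉ closedBall (0 : E) t := fun t ht hwt ↦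
      hw1 ((mem_closedBall_zero_iff.1 hwt).trans ht.2)
    rw [setLIntegral_congr_fun measurableSet_Ioc fun t ht ↦ by
      rw [indicator_of_notMem (hw1' t ht), mul_zero]]
    simp

variable [NormedSpace ℝ E] {F : Type*} [NormedAddCommGroup F] [NormedSpace ℝ F] [CompleteSpace F]

theorem enorm_sub_le_enorm_mul_lintegral_fderiv {f : E → F} {U : Set E} (hU : IsOpen U)
    (hf : ContDiffOn ℝ 1 f U) {z : E} (hz : segment ℝ 0 z ⊆ U) :
    ‖f z - f 0‖ₑ ≤ ‖z‖ₑ * ∫⁻ t in Ioc (0 : ℝ) 1, ‖fderiv ℝ f (t • z)‖ₑ := by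
  have hmem : ∀ t ∈ uIcc (0 : ℝ) 1, t • z ∈ U := fun t ht ↦ hz <| by
    rw [segment_eq_image', sub_zero]
    exact ⟨t, by rwa [uIcc_of_le zero_le_one] at ht, zero_add _⟩
  have hderiv : ∀ t ∈ uIcc (0 : ℝ) 1,
      HasDerivAt (fun s : ℝ ↦ f (s • z)) (fderiv ℝ f (t • z) z) t := fun t ht ↦
    ((hf.differentiableOn one_ne_zero).differentiableAt (hU.mem_nhds (hmem t ht))).hasFDerivAt
      |>.comp_hasDerivAt t ((hasDerivAt_id t).smul_const z |>.congr_deriv (one_smul ℝ z))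
  have hcont : ContinuousOn (fun t : ℝ ↦ fderiv ℝ f (t • z) z) (uIcc 0 1) :=
    ((hf.continuousOn_fderiv_of_isOpen hU le_rfl).comp (by fun_prop) hmem).clm_apply
      continuousOn_const
  have hftc := intervalIntegral.integral_eq_sub_of_hasDerivAt hderiv hcont.intervalIntegrable
  rw [zero_smul, one_smul, intervalIntegral.integral_of_le zero_le_one] at hftc
  calc ‖f z - f 0‖ₑ ≤ ∫⁻ t in Ioc (0 : ℝ) 1, ‖fderiv ℝ f (t • z) z‖ₑ :=
        hftc ▸ enorm_integral_le_lintegral_enorm _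
    _ ≤ ∫⁻ t in Ioc (0 : ℝ) 1, ‖z‖ₑ * ‖fderiv ℝ f (t • z)‖ₑ :=
        lintegral_mono fun t ↦ ((fderiv ℝ f (t • z)).le_opENorm z).trans_eq (mul_comm _ _)
    _ = ‖z‖ₑ * ∫⁻ t in Ioc (0 : ℝ) 1, ‖fderiv ℝ f (t • z)‖ₑ :=
        lintegral_const_mul' _ _ enorm_ne_top

theorem enorm_sub_rpow_le_mul_lintegral_fderiv [MeasurableSpace E] [BorelSpace E]
    {p : ℝ} (hp : 1 < p) (β : ℝ) {f : E → F} {U : Set E} (hU : IsOpen U)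
    (hf : ContDiffOn ℝ 1 f U) {z : E} (hz : segment ℝ 0 z ⊆ U) :
    ‖f z - f 0‖ₑ ^ p ≤
      (∫⁻ t in Ioc (0 : ℝ) 1, ENNReal.ofReal (t ^ β) ^ (-(p - 1)⁻¹)) ^ (p - 1) * ‖z‖ₑ ^ p *
        ∫⁻ t in Ioc (0 : ℝ) 1, ENNReal.ofReal (t ^ β) * ‖fderiv ℝ f (t • z)‖ₑ ^ p := by
  have hpos : ∀ᵐ t ∂(volume.restrict (Ioc (0 : ℝ) 1)), 0 < t :=
    (ae_restrict_mem measurableSet_Ioc).mono fun t ht ↦ ht.1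
  calc ‖f z - f 0‖ₑ ^ p
      ≤ (‖z‖ₑ * ∫⁻ t in Ioc (0 : ℝ) 1, ‖fderiv ℝ f (t • z)‖ₑ) ^ p :=
        ENNReal.rpow_le_rpow (enorm_sub_le_enorm_mul_lintegral_fderiv hU hf hz) (by linarith)
    _ = ‖z‖ₑ ^ p * (∫⁻ t in Ioc (0 : ℝ) 1, ‖fderiv ℝ f (t • z)‖ₑ) ^ p :=
        ENNReal.mul_rpow_of_nonneg _ _ (by linarith)
    _ ≤ _ := by
        rw [mul_comm _ (‖z‖ₑ ^ p), mul_assoc]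
        gcongr
        refine ENNReal.lintegral_rpow_le_lintegral_weight_rpow_mul _ hp (by fun_prop)
          (by fun_prop) ?_ (.of_forall fun t ↦ ENNReal.ofReal_ne_top)
        filter_upwards [hpos] with t ht using by simpa using Real.rpow_pos_of_pos ht β

variable [MeasurableSpace E] [BorelSpace E] [FiniteDimensional ℝ E] (μ : Measure E)
  [μ.IsAddHaarMeasure]

theorem setLIntegral_comp_smul_of_pos (f : E → ℝ≥0∞) (s : Set E) {R : ℝ} (hR : 0 < R) :
    ∫⁻ x in s, f (R • x) ∂μ = ENNReal.ofReal ((R ^ finrank ℝ E)⁻¹) * ∫⁻ x in R • s, f x ∂μ := by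
  let e : E ≃ᵐ E := (Homeomorph.smul (Units.mk0 R hR.ne')).toMeasurableEquiv
  have hs : R • s = e.symm ⁻¹' s := by
    ext y
    rw [mem_smul_set_iff_inv_smul_mem₀ hR.ne']
    rfl
  calc ∫⁻ x in s, f (R • x) ∂μ = ∫⁻ x in e ⁻¹' (e.symm ⁻¹' s), f (e x) ∂μ := by
        rw [← preimage_comp, e.symm_comp_self, preimage_id]; rfl
    _ = ∫⁻ y in e.symm ⁻¹' s, f y ∂Measure.map e μ := by
        rw [e.restrict_map, lintegral_map_equiv]
    _ = ENNReal.ofReal ((R ^ finrank ℝ E)⁻¹) * ∫⁻ x in R • s, f x ∂μ := by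
        rw [show ⇑e = (R • ·) from rfl, Measure.map_addHaar_smul μ hR.ne', Measure.restrict_smul,
          lintegral_smul_measure, abs_of_pos (by positivity), hs, smul_eq_mul]

theorem setLIntegral_closedBall_rpow_mul_comp_smul (Ψ : E → ℝ≥0∞) (α : ℝ) {t : ℝ}
    (ht : 0 < t) :
    ∫⁻ z in closedBall (0 : E) 1, ENNReal.ofReal (‖z‖ ^ α) * Ψ (t • z) ∂μ =
      ENNReal.ofReal (t ^ (-α - finrank ℝ E)) *
        ∫⁻ w in closedBall (0 : E) t, ENNReal.ofReal (‖w‖ ^ α) * Ψ w ∂μ := by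
  have hweight : ∀ z : E, ENNReal.ofReal (‖z‖ ^ α) * Ψ (t • z) =
      ENNReal.ofReal (t ^ (-α)) * (ENNReal.ofReal (‖t • z‖ ^ α) * Ψ (t • z)) := fun z ↦ by
    rw [← mul_assoc, ← ENNReal.ofReal_mul (by positivity), norm_smul, Real.norm_of_nonneg ht.le,
      Real.mul_rpow ht.le (norm_nonneg z), ← mul_assoc, ← Real.rpow_add ht, neg_add_cancel,
      Real.rpow_zero, one_mul]
  simp_rw [hweight]
  rw [lintegral_const_mul' _ _ ENNReal.ofReal_ne_top,
    setLIntegral_comp_smul_of_pos μ (fun w ↦ ENNReal.ofReal (‖w‖ ^ α) * Ψ w) _ ht,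
    smul_unitClosedBall_of_nonneg ht.le, ← mul_assoc, ← ENNReal.ofReal_mul (by positivity),
    ← Real.rpow_natCast, ← Real.rpow_neg ht.le, ← Real.rpow_add ht, sub_eq_add_neg]

theorem setLIntegral_closedBall_rpow_mul_radial_le {Ψ : E → ℝ≥0∞} (hΨ : Measurable Ψ)
    {α : ℝ} (hα : 0 < α) :
    ∫⁻ z in closedBall (0 : E) 1, ENNReal.ofReal (‖z‖ ^ α) *
        (∫⁻ t in Ioc (0 : ℝ) 1, ENNReal.ofReal (t ^ ((finrank ℝ E : ℝ) - 1)) * Ψ (t • z)) ∂μ ≤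
      ENNReal.ofReal α⁻¹ * ∫⁻ z in closedBall (0 : E) 1, Ψ z ∂μ := by
  set G : E → ℝ≥0∞ := fun w ↦ ENNReal.ofReal (‖w‖ ^ α) * Ψ w
  have hscale : ∀ t ∈ Ioc (0 : ℝ) 1,
      ∫⁻ z in closedBall (0 : E) 1, ENNReal.ofReal (t ^ ((finrank ℝ E : ℝ) - 1)) *
          (ENNReal.ofReal (‖z‖ ^ α) * Ψ (t • z)) ∂μ =
        ∫⁻ w, ENNReal.ofReal (t ^ (-α - 1)) * (closedBall (0 : E) t).indicator G w ∂μ := by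
    intro t ht
    rw [lintegral_const_mul' _ _ ENNReal.ofReal_ne_top,
      setLIntegral_closedBall_rpow_mul_comp_smul μ Ψ α ht.1, ← mul_assoc,
      ← ENNReal.ofReal_mul (Real.rpow_nonneg ht.1.le _), ← Real.rpow_add ht.1,
      lintegral_const_mul' _ _ ENNReal.ofReal_ne_top, lintegral_indicator measurableSet_closedBall,
      show (finrank ℝ E : ℝ) - 1 + (-α - finrank ℝ E) = -α - 1 by ring]
  have hmeas : Measurable fun p : ℝ × E ↦
      ENNReal.ofReal (p.1 ^ (-α - 1)) * (closedBall (0 : E) p.1).indicator G p.2 := by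
    refine (by fun_prop : Measurable fun p : ℝ × E ↦ ENNReal.ofReal (p.1 ^ (-α - 1))).mul ?_
    exact ((by fun_prop : Measurable G).comp measurable_snd).indicator
      (measurableSet_le (by fun_prop) measurable_fst)
  calc _ = ∫⁻ z in closedBall (0 : E) 1, (∫⁻ t in Ioc (0 : ℝ) 1,
          ENNReal.ofReal (t ^ ((finrank ℝ E : ℝ) - 1)) *
            (ENNReal.ofReal (‖z‖ ^ α) * Ψ (t • z))) ∂μ := by
        refine lintegral_congr fun z ↦ ?_
        rw [← lintegral_const_mul' _ _ ENNReal.ofReal_ne_top]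
        exact lintegral_congr fun t ↦ by ring
    _ = ∫⁻ t in Ioc (0 : ℝ) 1, ∫⁻ w, ENNReal.ofReal (t ^ (-α - 1)) *
          (closedBall (0 : E) t).indicator G w ∂μ := by
        rw [lintegral_lintegral_swap (by fun_prop)]
        exact setLIntegral_congr_fun measurableSet_Ioc hscale
    _ = ∫⁻ w, (∫⁻ t in Ioc (0 : ℝ) 1, ENNReal.ofReal (t ^ (-α - 1)) *
          (closedBall (0 : E) t).indicator G w) ∂μ :=
        lintegral_lintegral_swap hmeas.aemeasurable
    _ ≤ ∫⁻ w, ENNReal.ofReal α⁻¹ * (closedBall (0 : E) 1).indicator Ψ w ∂μ :=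
        lintegral_mono fun w ↦ lintegral_Ioc_rpow_mul_indicator_closedBall_le Ψ hα w
    _ = ENNReal.ofReal α⁻¹ * ∫⁻ z in closedBall (0 : E) 1, Ψ z ∂μ := by
        rw [lintegral_const_mul _ (hΨ.indicator measurableSet_closedBall),
          lintegral_indicator measurableSet_closedBall]

theorem exists_hardy_inequality_closedBall {p : ℝ} (hp : 1 < p) (hpE : (finrank ℝ E : ℝ) < p)
    {α : ℝ} (hα : 0 < α) :
    ∃ K : ℝ≥0, ∀ (f : E → F) (U : Set E), IsOpen U → closedBall (0 : E) 1 ⊆ U →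
      ContDiffOn ℝ 1 f U → f 0 = 0 →
      ∫⁻ z in closedBall (0 : E) 1, ENNReal.ofReal (‖z‖ ^ (α - p) * ‖f z‖ ^ p) ∂μ ≤
        K * ∫⁻ z in closedBall (0 : E) 1, ENNReal.ofReal (‖fderiv ℝ f z‖ ^ p) ∂μ := by
  set β : ℝ := finrank ℝ E - 1
  set L := (∫⁻ t in Ioc (0 : ℝ) 1, ENNReal.ofReal (t ^ β) ^ (-(p - 1)⁻¹)) ^ (p - 1)
  have hL : L ≠ ∞ := by
    refine ENNReal.rpow_ne_top_of_nonneg (by linarith) (lintegral_Ioc_ofReal_rpow_rpow_lt_top ?_).ne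
    rw [← div_eq_mul_inv, div_lt_one (by linarith)]
    linarith
  refine ⟨(L * ENNReal.ofReal α⁻¹).toNNReal, fun f U hU hBU hf hf0 ↦ ?_⟩
  have hpointwise : ∀ z ∈ closedBall (0 : E) 1,
      ENNReal.ofReal (‖z‖ ^ (α - p) * ‖f z‖ ^ p) ≤ L * (ENNReal.ofReal (‖z‖ ^ α) *
        ∫⁻ t in Ioc (0 : ℝ) 1, ENNReal.ofReal (t ^ β) * ‖fderiv ℝ f (t • z)‖ₑ ^ p) := by
    intro z hz
    rcases eq_or_ne z 0 with rfl | hz0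
    · simp [hf0, Real.zero_rpow (by linarith : p ≠ 0)]
    have hseg := (convex_closedBall (0 : E) 1).segment_subset (mem_closedBall_self zero_le_one) hz
    have hray := enorm_sub_rpow_le_mul_lintegral_fderiv hp β hU hf (hseg.trans hBU)
    rw [hf0, sub_zero] at hray
    have hweight : ENNReal.ofReal (‖z‖ ^ (α - p)) * ‖z‖ₑ ^ p = ENNReal.ofReal (‖z‖ ^ α) := by
      rw [← ofReal_norm, ENNReal.ofReal_rpow_of_pos (norm_pos_iff.2 hz0),
        ← ENNReal.ofReal_mul (by positivity), ← Real.rpow_add (norm_pos_iff.2 hz0), sub_add_cancel]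
    rw [ENNReal.ofReal_mul (by positivity), ofReal_norm_rpow (x := f z) (by linarith), ← hweight]
    calc _ ≤ ENNReal.ofReal (‖z‖ ^ (α - p)) * (L * ‖z‖ₑ ^ p *
            ∫⁻ t in Ioc (0 : ℝ) 1, ENNReal.ofReal (t ^ β) * ‖fderiv ℝ f (t • z)‖ₑ ^ p) := by
          gcongr
      _ = _ := by ring
  calc _ ≤ ∫⁻ z in closedBall (0 : E) 1, L * (ENNReal.ofReal (‖z‖ ^ α) *
        ∫⁻ t in Ioc (0 : ℝ) 1, ENNReal.ofReal (t ^ β) * ‖fderiv ℝ f (t • z)‖ₑ ^ p) ∂μ :=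
        setLIntegral_mono' measurableSet_closedBall hpointwise
    _ ≤ L * (ENNReal.ofReal α⁻¹ * ∫⁻ z in closedBall (0 : E) 1, ‖fderiv ℝ f z‖ₑ ^ p ∂μ) := by
        rw [lintegral_const_mul' _ _ hL]
        gcongr
        exact setLIntegral_closedBall_rpow_mul_radial_le μ (by fun_prop) hα
    _ = _ := by
        simp_rw [← mul_assoc, ENNReal.coe_toNNReal (ENNReal.mul_ne_top hL ENNReal.ofReal_ne_top),
          ofReal_norm_rpow (by linarith : 0 ≤ p)]

end

theorem ofReal_setIntegral_norm_iteratedFDeriv_pow {E F : Type*} [NormedAddCommGroup E]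
    [NormedSpace ℝ E] [MeasurableSpace E] [OpensMeasurableSpace E] [NormedAddCommGroup F]
    [NormedSpace ℝ F] {μ : Measure E} [IsFiniteMeasureOnCompacts μ] {f : E → F} {U s : Set E}
    {k j : ℕ} (hf : ContDiffOn ℝ k f U) (hU : IsOpen U) (hs : IsCompact s) (hsU : s ⊆ U)
    (hj : j ≤ k) (p : ℕ) :
    ENNReal.ofReal (∫ x in s, ‖iteratedFDeriv ℝ j f x‖ ^ p ∂μ) =
      ∫⁻ x in s, ENNReal.ofReal (‖iteratedFDeriv ℝ j f x‖ ^ p) ∂μ := by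
  have hcont := ContinuousOn.continuousOn_iteratedFDeriv hf hU (by exact_mod_cast hj)
  exact ofReal_integral_eq_lintegral_ofReal (((hcont.mono hsU).norm.pow p).integrableOn_compact hs)
    (.of_forall fun x ↦ by positivity)

theorem weighted_sobolev_disk_estimate_general (p : ℕ) (hp : 2 < p)
    (ν : ℝ) (hν' : ν < ((p : ℝ) - 2) / p) (k : ℕ) (hk : 1 ≤ k) :
    ∃ C > 0, ∀ (f : ℂ → ℝ) (U : Set ℂ), IsOpen U → closedBall (0 : ℂ) 1 ⊆ U →
      ContDiffOn ℝ k f U → f 0 = 0 →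
      (∑ j ∈ Finset.range (k + 1),
          ∫⁻ z in closedBall (0 : ℂ) 1,
            ENNReal.ofReal
              (‖z‖ ^ ((j : ℝ) * p - ν * p - 2) * ‖iteratedFDeriv ℝ j f z‖ ^ p)) ≤
        ENNReal.ofReal
          (C * ∑ j ∈ Finset.range (k + 1),
            ∫ z in closedBall (0 : ℂ) 1, ‖iteratedFDeriv ℝ j f z‖ ^ p) := by
  have hp' : (2 : ℝ) < p := by exact_mod_cast hp
  have hα : 0 < (p : ℝ) - ν * p - 2 := by
    have := (lt_div_iff₀ (by linarith)).1 hν'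
    linarith
  obtain ⟨K, hK⟩ := exists_hardy_inequality_closedBall (F := ℝ) (volume : Measure ℂ) (p := p)
    (by linarith) (by simpa using hp') hα
  refine ⟨((k + 1) * (1 + K) : ℝ≥0), by positivity, fun f U hU hBU hf hf0 ↦ ?_⟩
  set I : ℕ → ℝ≥0∞ := fun j ↦
    ∫⁻ z in closedBall (0 : ℂ) 1, ENNReal.ofReal (‖iteratedFDeriv ℝ j f z‖ ^ p)
  have hterm : ∀ j ∈ Finset.range (k + 1), ∫⁻ z in closedBall (0 : ℂ) 1,
      ENNReal.ofReal (‖z‖ ^ ((j : ℝ) * p - ν * p - 2) * ‖iteratedFDeriv ℝ j f z‖ ^ p) ≤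
        (1 + K) * ∑ i ∈ Finset.range (k + 1), I i := by
    rintro (_ | j) hj
    · have hexp : ((0 : ℕ) : ℝ) * p - ν * p - 2 = (p - ν * p - 2) - p := by push_cast; ring
      have h0 := hK f U hU hBU (hf.of_le (by exact_mod_cast hk)) hf0
      simp only [Real.rpow_natCast, ← norm_iteratedFDeriv_one (𝕜 := ℝ)] at h0
      simp only [hexp, norm_iteratedFDeriv_zero]
      exact h0.trans (mul_le_mul' le_add_self
        (Finset.single_le_sum (f := I) (fun _ _ ↦ zero_le) (Finset.mem_range.2 (by omega))))
    · refine (setLIntegral_closedBall_rpow_mul_le _ ?_ fun z ↦ by positivity).trans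
        ((Finset.single_le_sum (f := I) (fun _ _ ↦ zero_le) hj).trans
          (le_mul_of_one_le_left' le_self_add))
      have : (0 : ℝ) ≤ j * p := by positivity
      push_cast
      linarith
  calc _ ≤ ∑ _j ∈ Finset.range (k + 1), (1 + K) * ∑ i ∈ Finset.range (k + 1), I i :=
        Finset.sum_le_sum hterm
    _ = _ := by
        rw [Finset.sum_const, Finset.card_range, nsmul_eq_mul, ENNReal.ofReal_mul (by positivity),
          ENNReal.ofReal_coe_nnreal, ENNReal.ofReal_sum_of_nonneg fun j _ ↦ by positivity,
          Finset.sum_congr rfl fun j hj ↦ ofReal_setIntegral_norm_iteratedFDeriv_pow hf hU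
            (isCompact_closedBall 0 1) hBU (Finset.mem_range_succ_iff.1 hj) p]
        push_cast
        ring

/-- Weighted Sobolev estimate on the disk: for an even integer `p > 2`, `0 < ν < (p−2)/p`
and `k ≥ 1`, there is `C = C(p, ν, k) > 0` such that for every `f : ℂ → ℝ` that is `k` times
continuously differentiable on an open neighborhood of the closed unit disk `D` with
`f 0 = 0`,
`Σ_{j=0}^k ∫_D ‖z‖^{jp−νp−2} ‖D^j f‖^p dA ≤ C · Σ_{j=0}^k ∫_D ‖D^j f‖^p dA`. -/
theorem weighted_sobolev_disk_estimate (p : ℕ) (hp : 2 < p) (hpeven : Even p)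
    (ν : ℝ) (hν : 0 < ν) (hν' : ν < ((p : ℝ) - 2) / p) (k : ℕ) (hk : 1 ≤ k) :
    ∃ C > 0, ∀ (f : ℂ → ℝ) (U : Set ℂ), IsOpen U → closedBall (0 : ℂ) 1 ⊆ U →
      ContDiffOn ℝ k f U → f 0 = 0 →
      (∑ j ∈ Finset.range (k + 1),
          ∫⁻ z in closedBall (0 : ℂ) 1,
            ENNReal.ofReal
              (‖z‖ ^ ((j : ℝ) * p - ν * p - 2) * ‖iteratedFDeriv ℝ j f z‖ ^ p)) ≤
        ENNReal.ofReal
          (C * ∑ j ∈ Finset.range (k + 1),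
            ∫ z in closedBall (0 : ℂ) 1, ‖iteratedFDeriv ℝ j f z‖ ^ p) :=
  weighted_sobolev_disk_estimate_general p hp ν hν' k hk
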